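/- For an odd integer n ≥ 3, C_{n,n+1} is an n-uniform linear system with n(n−1)+2 points and 3n−1 lines, having exactly 2 points of degree n (namely p and q) and n(n−1) points of degree 3. -/
import Mathlib
open Finset
/-- Points of the linear system `C_{n,n+1}`: `Sum.inl (h, g)` are the grid points
(used when `g ≠ 0`), `Sum.inr false` is the point `p`, `Sum.inr true` is the point `q`. -/
abbrev Pt (Γ : Type) := (Γ × Γ) ⊕ Bool
variable {Γ : Type} [AddCommGroup Γ] [Fintype Γ] [DecidableEq Γ]
/-- The horizontal line `L_g = {(h,g) : h ∈ Γ}` (used for `g ≠ 0`). -/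
def Lh (g : Γ) : Finset (Pt Γ) := univ.image fun h => Sum.inl (h, g)
/-- The line `l_{p_g} = {(g,h) : h ∈ Γ \ {0}} ∪ {p}` through `p`. -/
def Lp (g : Γ) : Finset (Pt Γ) :=
  ((univ.filter fun h => h ≠ (0 : Γ)).image fun h => Sum.inl (g, h)) ∪ {Sum.inr false}
/-- The line `l_{q_g} = {(h, h+g) : h ∈ Γ, h+g ≠ 0} ∪ {q}` through `q`. -/
def Lq (g : Γ) : Finset (Pt Γ) :=
  ((univ.filter fun h => h + g ≠ (0 : Γ)).image fun h => Sum.inl (h, h + g)) ∪ {Sum.inr true}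

lemma mem_Lh_inl {a b g : Γ} : Sum.inl (a,b) ∈ Lh g ↔ b = g := by
  simp [Lh, eq_comm]
lemma notMem_Lh_inr {t : Bool} {g : Γ} : Sum.inr t ∉ Lh g := by simp [Lh]
lemma mem_Lp_inl {a b g : Γ} : Sum.inl (a,b) ∈ Lp g ↔ a = g ∧ b ≠ 0 := by
  simp only [Lp, mem_union, mem_image, mem_filter, mem_univ, true_and, mem_singleton]
  constructor
  · rintro (⟨h, hh, he⟩ | h)
    · cases he; exact ⟨rfl, hh⟩
    · simp at h
  · rintro ⟨rfl, hb⟩; exact Or.inl ⟨b, hb, rfl⟩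
lemma mem_Lp_inr {t : Bool} {g : Γ} : Sum.inr t ∈ Lp g ↔ t = false := by simp [Lp]
lemma mem_Lq_inl {a b g : Γ} : Sum.inl (a,b) ∈ Lq g ↔ b - a = g ∧ b ≠ 0 := by
  simp only [Lq, mem_union, mem_image, mem_filter, mem_univ, true_and, mem_singleton]
  constructor
  · rintro (⟨h, hh, he⟩ | h)
    · obtain ⟨rfl, rfl⟩ : h = a ∧ h + g = b := by
        constructor <;> injection he with he' <;> cases he' <;> rfl
      exact ⟨by abel, hh⟩
    · simp at h
  · rintro ⟨rfl, hb⟩; exact Or.inl ⟨a, by simpa using hb, by simp⟩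
lemma mem_Lq_inr {t : Bool} {g : Γ} : Sum.inr t ∈ Lq g ↔ t = true := by simp [Lq]

set_option linter.unusedSectionVars false

lemma card_Lh (g : Γ) : (Lh g : Finset (Pt Γ)).card = Fintype.card Γ := by
  rw [Lh, card_image_of_injective _ (by intro x y h; injection h with h'; exact (Prod.mk.injEq ..).mp h' |>.1)]
  simp

lemma card_Lp (g : Γ) : (Lp g : Finset (Pt Γ)).card = Fintype.card Γ := by
  rw [Lp, card_union_of_disjoint (by simp), card_image_of_injective _
    (by intro x y h; injection h with h'; exact (Prod.mk.injEq ..).mp h' |>.2)]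
  rw [filter_ne', card_erase_of_mem (mem_univ _), card_univ, card_singleton]
  have : 1 ≤ Fintype.card Γ := Fintype.card_pos
  omega

lemma card_Lq (g : Γ) : (Lq g : Finset (Pt Γ)).card = Fintype.card Γ := by
  rw [Lq, card_union_of_disjoint (by simp), card_image_of_injective _
    (by intro x y h; injection h with h'; exact (Prod.mk.injEq ..).mp h' |>.1)]
  have : (univ.filter fun h => h + g ≠ (0:Γ)) = univ.erase (-g) := by
    ext h; simp [add_eq_zero_iff_eq_neg]
  rw [this, card_erase_of_mem (mem_univ _), card_univ, card_singleton]
  have : 1 ≤ Fintype.card Γ := Fintype.card_pos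
  omega

/-- The line set of the linear system `C_{n,n+1}`. -/
def CL (Γ : Type) [AddCommGroup Γ] [Fintype Γ] [DecidableEq Γ] : Finset (Finset (Pt Γ)) :=
  ((univ.filter fun g => g ≠ (0 : Γ)).image Lh) ∪ (univ.image Lp) ∪ (univ.image Lq)
/-- The degree of a point of `C_{n,n+1}`: the number of lines containing it. -/
def deg (Γ : Type) [AddCommGroup Γ] [Fintype Γ] [DecidableEq Γ] (x : Pt Γ) : ℕ :=
  ((CL Γ).filter fun l => x ∈ l).card

lemma Lh_inj : Function.Injective (Lh (Γ := Γ)) := by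
  intro g1 g2 h
  have : (Sum.inl (0, g1) : Pt Γ) ∈ Lh g1 := mem_Lh_inl.mpr rfl
  rw [h] at this
  exact mem_Lh_inl.mp this

lemma Lp_inj (hc : 2 ≤ Fintype.card Γ) : Function.Injective (Lp (Γ := Γ)) := by
  intro g1 g2 h
  obtain ⟨x, hx⟩ := Fintype.exists_ne_of_one_lt_card hc (0 : Γ)
  have : (Sum.inl (g1, x) : Pt Γ) ∈ Lp g1 := mem_Lp_inl.mpr ⟨rfl, hx⟩
  rw [h] at this
  exact (mem_Lp_inl.mp this).1

lemma Lq_inj (hc : 2 ≤ Fintype.card Γ) : Function.Injective (Lq (Γ := Γ)) := by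
  intro g1 g2 h
  obtain ⟨x, hx⟩ := Fintype.exists_ne_of_one_lt_card hc (0 : Γ)
  have : (Sum.inl (x - g1, x) : Pt Γ) ∈ Lq g1 :=
    mem_Lq_inl.mpr ⟨(by abel : x - (x - g1) = g1), hx⟩
  rw [h] at this
  have := (mem_Lq_inl.mp this).1
  rw [← this]; abel

lemma Lh_ne_Lp (g g' : Γ) : Lh g ≠ Lp g' := fun h => notMem_Lh_inr (h ▸ mem_Lp_inr.mpr rfl)
lemma Lh_ne_Lq (g g' : Γ) : Lh g ≠ Lq g' := fun h => notMem_Lh_inr (h ▸ mem_Lq_inr.mpr rfl)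
lemma Lp_ne_Lq (g g' : Γ) : Lp g ≠ Lq g' := fun h => by
  have h1 : (Sum.inr false : Pt Γ) ∈ Lp g := mem_Lp_inr.mpr rfl
  rw [h] at h1
  simpa using mem_Lq_inr.mp h1

lemma card_CL (n : ℕ) (hn : Fintype.card Γ = n) (h3 : 3 ≤ n) : (CL Γ).card = 3 * n - 1 := by
  have hc : 2 ≤ Fintype.card Γ := by omega
  rw [CL, card_union_of_disjoint, card_union_of_disjoint]
  · rw [card_image_of_injective _ Lh_inj, card_image_of_injective _ (Lp_inj hc),
      card_image_of_injective _ (Lq_inj hc), filter_ne', card_erase_of_mem (mem_univ _),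
      card_univ, hn]
    omega
  · simp only [disjoint_left, mem_image, mem_filter, mem_univ, true_and]
    rintro _ ⟨g, _, rfl⟩ ⟨g', hg'⟩
    exact Lh_ne_Lp g g' hg'.symm
  · simp only [disjoint_left, mem_union, mem_image, mem_filter, mem_univ, true_and]
    rintro _ (⟨g, _, rfl⟩ | ⟨g, rfl⟩) ⟨g', hg'⟩
    · exact Lh_ne_Lq g g' hg'.symm
    · exact Lp_ne_Lq g g' hg'.symm

lemma mem_CL {l : Finset (Pt Γ)} :
    l ∈ CL Γ ↔ (∃ g ≠ (0:Γ), Lh g = l) ∨ (∃ g, Lp g = l) ∨ (∃ g, Lq g = l) := by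
  simp [CL, or_assoc]

lemma deg_p (hc : 2 ≤ Fintype.card Γ) : deg Γ (Sum.inr false) = Fintype.card Γ := by
  have : ((CL Γ).filter fun l => (Sum.inr false : Pt Γ) ∈ l) = univ.image Lp := by
    ext l
    simp only [mem_filter, mem_CL, mem_image, mem_univ, true_and]
    constructor
    · rintro ⟨(⟨g, _, rfl⟩ | ⟨g, rfl⟩ | ⟨g, rfl⟩), hm⟩
      · exact absurd hm notMem_Lh_inr
      · exact ⟨g, rfl⟩
      · simpa using mem_Lq_inr.mp hm
    · rintro ⟨g, rfl⟩
      exact ⟨Or.inr (Or.inl ⟨g, rfl⟩), mem_Lp_inr.mpr rfl⟩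
  rw [deg, this, card_image_of_injective _ (Lp_inj hc), card_univ]

lemma deg_q (hc : 2 ≤ Fintype.card Γ) : deg Γ (Sum.inr true) = Fintype.card Γ := by
  have : ((CL Γ).filter fun l => (Sum.inr true : Pt Γ) ∈ l) = univ.image Lq := by
    ext l
    simp only [mem_filter, mem_CL, mem_image, mem_univ, true_and]
    constructor
    · rintro ⟨(⟨g, _, rfl⟩ | ⟨g, rfl⟩ | ⟨g, rfl⟩), hm⟩
      · exact absurd hm notMem_Lh_inr
      · simpa using mem_Lp_inr.mp hm
      · exact ⟨g, rfl⟩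
    · rintro ⟨g, rfl⟩
      exact ⟨Or.inr (Or.inr ⟨g, rfl⟩), mem_Lq_inr.mpr rfl⟩
  rw [deg, this, card_image_of_injective _ (Lq_inj hc), card_univ]

lemma deg_grid (a b : Γ) (hb : b ≠ 0) : deg Γ (Sum.inl (a, b)) = 3 := by
  have : ((CL Γ).filter fun l => (Sum.inl (a,b) : Pt Γ) ∈ l) = {Lh b, Lp a, Lq (b - a)} := by
    ext l
    simp only [mem_filter, mem_CL, mem_insert, mem_singleton]
    constructor
    · rintro ⟨(⟨g, _, rfl⟩ | ⟨g, rfl⟩ | ⟨g, rfl⟩), hm⟩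
      · exact Or.inl (by rw [(mem_Lh_inl.mp hm)])
      · exact Or.inr (Or.inl (by rw [(mem_Lp_inl.mp hm).1]))
      · exact Or.inr (Or.inr (by rw [(mem_Lq_inl.mp hm).1]))
    · rintro (rfl | rfl | rfl)
      · exact ⟨Or.inl ⟨b, hb, rfl⟩, mem_Lh_inl.mpr rfl⟩
      · exact ⟨Or.inr (Or.inl ⟨a, rfl⟩), mem_Lp_inl.mpr ⟨rfl, hb⟩⟩
      · exact ⟨Or.inr (Or.inr ⟨b - a, rfl⟩), mem_Lq_inl.mpr ⟨rfl, hb⟩⟩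
  rw [deg, this]
  rw [card_insert_of_notMem (by simp [Lh_ne_Lp, Lh_ne_Lq]),
    card_insert_of_notMem (by simp [Lp_ne_Lq]), card_singleton]

/-- `C_{n,n+1}` is an `n`-uniform linear system with `n(n-1)+2` points and `3n-1` lines,
whose points `p` and `q` have degree `n` and whose `n(n-1)` grid points have degree `3`. -/
theorem C_structure (n : ℕ) (hn : Fintype.card Γ = n) (hodd : Odd n) (h3 : 3 ≤ n) :
    (∀ l ∈ CL Γ, l.card = n) ∧
    ((univ ×ˢ (univ.filter fun g => g ≠ (0 : Γ))).image Sum.inl ∪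
      ({Sum.inr false, Sum.inr true} : Finset (Pt Γ))).card = n * (n - 1) + 2 ∧
    (CL Γ).card = 3 * n - 1 ∧
    deg Γ (Sum.inr false) = n ∧ deg Γ (Sum.inr true) = n ∧
    (∀ a b : Γ, b ≠ 0 → deg Γ (Sum.inl (a, b)) = 3) := by
  have hc : 2 ≤ Fintype.card Γ := by omega
  refine ⟨?_, ?_, card_CL n hn h3, by rw [deg_p hc, hn], by rw [deg_q hc, hn], fun a b hb => deg_grid a b hb⟩
  · intro l hl
    rcases mem_CL.mp hl with ⟨g, _, rfl⟩ | ⟨g, rfl⟩ | ⟨g, rfl⟩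
    · rw [card_Lh, hn]
    · rw [card_Lp, hn]
    · rw [card_Lq, hn]
  · rw [card_union_of_disjoint (by simp), card_image_of_injective _ Sum.inl_injective,
      card_product, filter_ne', card_erase_of_mem (mem_univ _), card_univ, hn]
    simp
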